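/- Let F be a field of characteristic p > 0, let {a₁,…,aₙ} ⊆ F* be p-independent over F (so π = ⟪a₁,…,aₙ⟫ is anisotropic over F), let 1 ≤ s ≤ n, and set σ = ⟨1,a₁,…,a_s⟩. Let E/F be a field extension with dim(π_E)_an = p^k. Then dim(σ_E)_an ≥ k − n + s + 1. -/

import Mathlib

open scoped BigOperators

set_option synthInstance.maxHeartbeats 1000000
set_option maxHeartbeats 1000000

/-- The subfield `F^p` of `p`-th powers of `F` (generated as a subfield). -/
def pPow (p : ℕ) (F : Type*) [Field F] : Subfield F :=
  Subfield.closure (Set.range fun x : F => x ^ p)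

/-- The degree `[F^p(S) : F^p]`. -/
noncomputable def pDeg (p : ℕ) {F : Type*} [Field F] (S : Set F) : ℕ :=
  Module.finrank ↥(pPow p F) ↥(IntermediateField.adjoin ↥(pPow p F) S)

/-- A finite family `a : ι → F` is `p`-independent over `F` if
`[F^p(a i, i : ι) : F^p] = p ^ #ι`. -/
def pIndep (p : ℕ) {F : Type*} [Field F] {ι : Type*} [Fintype ι] (a : ι → F) : Prop :=
  pDeg p (Set.range a) = p ^ Fintype.card ι

/-- The defect `i_d(φ_E)` of the diagonal quasilinear `p`-form with coefficients `a` over `E`: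
the `E`-dimension of its zero set (an `E`-subspace in characteristic `p`). -/
noncomputable def defect (p : ℕ) (E : Type*) [Field E] {ι : Type*} [Fintype ι] (a : ι → E) : ℕ :=
  Module.finrank E ↥(Submodule.span E {x : ι → E | ∑ i, a i * x i ^ p = 0})

/-- A diagonal quasilinear `p`-form is anisotropic over `E`. -/
def Anisotropic (p : ℕ) (E : Type*) [Field E] {ι : Type*} [Fintype ι] (a : ι → E) : Prop :=
  ∀ x : ι → E, ∑ i, a i * x i ^ p = 0 → x = 0

/-- The value set `D_E(φ)` of a diagonal quasilinear `p`-form. -/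
def valueSet (p : ℕ) (E : Type*) [Field E] {ι : Type*} [Fintype ι] (a : ι → E) : Set E :=
  {y | ∃ x : ι → E, y = ∑ i, a i * x i ^ p}

/-!
Over `K = E^p`, the map `x ↦ x^p` identifies the zero set of a diagonal form `⟨b₁,…,b_m⟩_E` with
the kernel of `c ↦ ∑ cᵢ bᵢ` on `K^m`, so its anisotropic dimension is `dim_K span_K {bᵢ}`.
Hence `p^k = dim_K span_K {monomials in the aᵢ}` and `dim (σ_E)_an = dim_K span_K {1, a₁, …, a_s}`,
say `m`. Complete `1` to a `K`-basis `{1} ∪ S` of the latter span: every `aᵢ` then lies in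
`K[S, a_{s+1}, …, aₙ]`, which is spanned by its monomials with exponents `< p` because `p`-th powers
lie in `K`. So `p^k ≤ p^(m - 1 + n - s)`.
-/

open Module Submodule Set

theorem pow_mem_pPow (p : ℕ) {E : Type*} [Field E] (x : E) : x ^ p ∈ pPow p E :=
  Subfield.subset_closure ⟨x, rfl⟩

section pPow

variable (p : ℕ) [Fact p.Prime] (E : Type*) [Field E] [CharP E p]

theorem pPow_eq_fieldRange : pPow p E = (frobenius E p).fieldRange := by
  rw [pPow, ← Subfield.closure_eq (frobenius E p).fieldRange, RingHom.coe_fieldRange]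
  rfl

noncomputable def frobeniusEquivPPow : E ≃+* pPow p E :=
  RingEquiv.ofBijective ((frobenius E p).codRestrict (pPow p E) (pow_mem_pPow p))
    ⟨fun x y h => frobenius_inj E p (congrArg Subtype.val h), by
      rintro ⟨y, hy⟩
      rw [pPow_eq_fieldRange, RingHom.mem_fieldRange] at hy
      obtain ⟨x, rfl⟩ := hy
      exact ⟨x, rfl⟩⟩

@[simp]
theorem coe_frobeniusEquivPPow (x : E) : (frobeniusEquivPPow p E x : E) = x ^ p := rfl

variable {E} {ι : Type*} [Fintype ι]

theorem defect_eq_finrank_ker (b : ι → E) :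
    defect p E b = finrank (pPow p E) (LinearMap.ker (Fintype.linearCombination (pPow p E) b)) := by
  set K := pPow p E
  set φ := frobeniusEquivPPow p E
  set L := Fintype.linearCombination K b
  let Φ : (ι → E) →ₛₗ[(φ : E →+* K)] (ι → K) :=
    { toFun x i := φ (x i)
      map_add' x y := funext fun i => map_add φ (x i) (y i)
      map_smul' c x := funext fun i => map_mul φ c (x i) }
  have hzero : {x : ι → E | ∑ i, b i * x i ^ p = 0} = (L.ker.comap Φ : Set (ι → E)) := by
    ext x
    simp [L, Φ, φ, Fintype.linearCombination_apply, Subfield.smul_def, mul_comm]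
  let j : L.ker.comap Φ ≃+ L.ker :=
    { (Equiv.piCongrRight fun _ => φ.toEquiv).subtypeEquiv fun _ => Iff.rfl with
      map_add' x y := Subtype.ext (Φ.map_add x y) }
  rw [defect, hzero, span_eq]
  exact congrArg Cardinal.toNat
    (rank_eq_of_equiv_equiv φ j φ.bijective fun r x => Subtype.ext (Φ.map_smulₛₗ r x))

theorem defect_add_finrank_span (b : ι → E) :
    defect p E b + (range b).finrank (pPow p E) = Fintype.card ι := by
  rw [defect_eq_finrank_ker, Set.finrank, ← Fintype.range_linearCombination, add_comm,
    LinearMap.finrank_range_add_finrank_ker, finrank_fintype_fun_eq_card]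

end pPow

section Monomials

variable {K A : Type*} [Field K] [CommRing A] [Algebra K A] {p : ℕ} [NeZero p]

theorem toSubmodule_adjoin_range_le_span_prod_pow {γ : Type*} [Fintype γ] {g : γ → A}
    (hg : ∀ i, g i ^ p ∈ (⊥ : Subalgebra K A)) :
    Subalgebra.toSubmodule (Algebra.adjoin K (range g)) ≤
      span K (range fun e : γ → Fin p => ∏ i, g i ^ (e i : ℕ)) := by
  classical
  set M := span K (range fun e : γ → Fin p => ∏ i, g i ^ (e i : ℕ))
  -- reducing the exponents mod `p` only costs a scalar factor, since `g i ^ p ∈ K`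
  have hmono (N : γ → ℕ) : ∏ i, g i ^ N i ∈ M := by
    obtain ⟨c, hc⟩ := Algebra.mem_bot.mp <| Subalgebra.prod_mem _ fun i _ =>
      (pow_mul (g i) p (N i / p)).symm ▸ Subalgebra.pow_mem _ (hg i) (N i / p)
    have hsplit : ∏ i, g i ^ N i = c • ∏ i, g i ^ (N i % p) := by
      rw [Algebra.smul_def, hc, ← Finset.prod_mul_distrib]
      simp only [← pow_add, Nat.div_add_mod]
    rw [hsplit]
    exact M.smul_mem c (subset_span ⟨fun i => ⟨N i % p, Nat.mod_lt _ (NeZero.pos p)⟩, rfl⟩)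
  have hmul : M * M ≤ M := by
    rw [span_mul_span, span_le]
    rintro _ ⟨_, ⟨e, rfl⟩, _, ⟨f, rfl⟩, rfl⟩
    simpa only [SetLike.mem_coe, ← Finset.prod_mul_distrib, ← pow_add] using
      hmono fun i => e i + f i
  let S : Subalgebra K A :=
    M.toSubalgebra (by simpa using hmono 0) fun x y hx hy => hmul (mul_mem_mul hx hy)
  have hgS : range g ⊆ S := by
    rintro _ ⟨i, rfl⟩
    exact show g i ∈ M by simpa [Pi.single_apply] using hmono (Pi.single i 1)
  exact fun x hx => Algebra.adjoin_le hgS hx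

theorem toSubmodule_adjoin_le_span_prod_pow {T : Finset A}
    (hT : ∀ x ∈ T, x ^ p ∈ (⊥ : Subalgebra K A)) :
    Subalgebra.toSubmodule (Algebra.adjoin K (T : Set A)) ≤
      span K (range fun e : T → Fin p => ∏ i : T, (i : A) ^ (e i : ℕ)) := by
  simpa using toSubmodule_adjoin_range_le_span_prod_pow (g := ((↑) : T → A)) fun x => hT x x.2

theorem finite_adjoin_of_pow_mem_bot {T : Finset A}
    (hT : ∀ x ∈ T, x ^ p ∈ (⊥ : Subalgebra K A)) :
    Module.Finite K (Algebra.adjoin K (T : Set A)) :=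
  have := FiniteDimensional.span_of_finite K
    (finite_range fun e : T → Fin p => ∏ i : T, (i : A) ^ (e i : ℕ))
  Submodule.finiteDimensional_of_le (toSubmodule_adjoin_le_span_prod_pow hT)

theorem finrank_adjoin_le_pow_card {T : Finset A}
    (hT : ∀ x ∈ T, x ^ p ∈ (⊥ : Subalgebra K A)) :
    finrank K (Algebra.adjoin K (T : Set A)) ≤ p ^ T.card := by
  classical
  have := FiniteDimensional.span_of_finite K
    (finite_range fun e : T → Fin p => ∏ i : T, (i : A) ^ (e i : ℕ))
  calc finrank K (Algebra.adjoin K (T : Set A))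
      ≤ (range fun e : T → Fin p => ∏ i : T, (i : A) ^ (e i : ℕ)).finrank K := by
        rw [← Subalgebra.finrank_toSubmodule]
        exact Submodule.finrank_mono (toSubmodule_adjoin_le_span_prod_pow hT)
    _ ≤ p ^ T.card := by
        simpa using finrank_range_le_card (R := K)
          (fun e : T → Fin p => ∏ i : T, (i : A) ^ (e i : ℕ))

end Monomials

theorem exists_finset_subset_card_lt_finrank_span {K V : Type*} [DivisionRing K] [AddCommGroup V]
    [Module K V] {X : Set V} (hX : X.Finite) {v : V} (hv : v ∈ X) (hv0 : v ≠ 0) :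
    ∃ S : Finset V, ↑S ⊆ X ∧ S.card < X.finrank K ∧ X ⊆ span K (insert v ↑S) := by
  classical
  obtain ⟨b, hbX, hvb, hXb, hb⟩ := exists_linearIndepOn_id_extension
    ((linearIndepOn_singleton_iff K).mpr hv0) (singleton_subset_iff.mpr hv)
  have hbfin := hX.subset hbX
  have := FiniteDimensional.span_of_finite K hX
  have hvb' : v ∈ hbfin.toFinset := hbfin.mem_toFinset.mpr (hvb rfl)
  refine ⟨hbfin.toFinset.erase v, ?_, ?_, ?_⟩
  · rw [Finset.coe_erase, hbfin.coe_toFinset]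
    exact sdiff_subset.trans hbX
  · calc (hbfin.toFinset.erase v).card < hbfin.toFinset.card := Finset.card_erase_lt_of_mem hvb'
      _ = b.finrank K := by
        rw [Set.finrank, ← finrank_span_finset_eq_card (R := K) (by simpa using hb),
          hbfin.coe_toFinset]
      _ ≤ X.finrank K := Submodule.finrank_mono (span_mono hbX)
  · rwa [← Finset.coe_insert, Finset.insert_erase hvb', hbfin.coe_toFinset]

theorem mul_finrank_adjoin_union_le {K A : Type*} [Field K] [CommRing A] [Nontrivial A]
    [Algebra K A] {p : ℕ} [NeZero p] {X Y : Finset A} (hX1 : 1 ∈ X)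
    (hX : ∀ x ∈ X, x ^ p ∈ (⊥ : Subalgebra K A)) (hY : ∀ y ∈ Y, y ^ p ∈ (⊥ : Subalgebra K A)) :
    p * finrank K (Algebra.adjoin K ((X : Set A) ∪ Y)) ≤
      p ^ ((X : Set A).finrank K + Y.card) := by
  classical
  obtain ⟨S, hSX, hScard, hXS⟩ :=
    exists_finset_subset_card_lt_finrank_span (K := K) X.finite_toSet hX1 one_ne_zero
  have hSY : ∀ x ∈ S ∪ Y, x ^ p ∈ (⊥ : Subalgebra K A) := by
    simp only [Finset.mem_union]
    rintro x (hx | hx)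
    exacts [hX x (hSX hx), hY x hx]
  have hspan : span K (insert 1 (S : Set A)) ≤
      Subalgebra.toSubmodule (Algebra.adjoin K (↑(S ∪ Y) : Set A)) :=
    span_le.mpr <| insert_subset_iff.mpr
      ⟨(Algebra.adjoin K _).one_mem, fun x hx => Algebra.subset_adjoin (Finset.mem_union_left _ hx)⟩
  have hle : Algebra.adjoin K ((X : Set A) ∪ Y) ≤ Algebra.adjoin K ↑(S ∪ Y) :=
    Algebra.adjoin_le <| union_subset (fun x hx => hspan (hXS hx))
      fun y hy => Algebra.subset_adjoin (Finset.mem_union_right _ hy)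
  have := finite_adjoin_of_pow_mem_bot hSY
  calc p * finrank K (Algebra.adjoin K ((X : Set A) ∪ Y))
      ≤ p * finrank K (Algebra.adjoin K (↑(S ∪ Y) : Set A)) := by
        simp only [← Subalgebra.finrank_toSubmodule]
        exact Nat.mul_le_mul_left _ (Submodule.finrank_mono hle)
    _ ≤ p * p ^ (S ∪ Y).card := Nat.mul_le_mul_left _ (finrank_adjoin_le_pow_card hSY)
    _ ≤ p ^ ((X : Set A).finrank K + Y.card) := by
        rw [← pow_succ']
        exact Nat.pow_le_pow_right (NeZero.pos p) (by have := Finset.card_union_le S Y; omega)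

theorem mul_finrank_span_prod_pow_le {K A : Type*} [Field K] [CommRing A] [Nontrivial A]
    [Algebra K A] {p : ℕ} [NeZero p] {n s : ℕ} (hsn : s ≤ n) (a : Fin n → A)
    (ha : ∀ r, a r ^ p ∈ (⊥ : Subalgebra K A)) :
    p * (range fun e : Fin n → Fin p => ∏ r, a r ^ (e r : ℕ)).finrank K ≤
      p ^ ((insert 1 (range (a ∘ Fin.castLE hsn))).finrank K + (n - s)) := by
  classical
  set X := insert 1 (Finset.univ.image (a ∘ Fin.castLE hsn))
  set Y := Finset.univ.image fun i : Fin (n - s) => a ⟨s + i, by omega⟩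
  have hX : ∀ x ∈ X, x ^ p ∈ (⊥ : Subalgebra K A) := by
    simp only [X, Finset.forall_mem_insert, Finset.forall_mem_image]
    exact ⟨by simp, fun r _ => ha _⟩
  have hY : ∀ y ∈ Y, y ^ p ∈ (⊥ : Subalgebra K A) := by
    simp only [Y, Finset.forall_mem_image]
    exact fun i _ => ha _
  have hrange : range a ⊆ ↑X ∪ ↑Y := by
    rintro _ ⟨r, rfl⟩
    by_cases hr : (r : ℕ) < s
    · exact Or.inl (Finset.mem_insert_of_mem (Finset.mem_image.mpr
        ⟨⟨r, hr⟩, Finset.mem_univ _, rfl⟩))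
    · refine Or.inr (Finset.mem_image.mpr
        ⟨⟨r - s, by omega⟩, Finset.mem_univ _, congrArg a (Fin.ext ?_)⟩)
      simp only
      omega
  have hspan : span K (range fun e : Fin n → Fin p => ∏ r, a r ^ (e r : ℕ)) ≤
      Subalgebra.toSubmodule (Algebra.adjoin K ((X : Set A) ∪ Y)) := span_le.mpr <| by
    rintro _ ⟨e, rfl⟩
    exact Subalgebra.prod_mem _ fun r _ =>
      Subalgebra.pow_mem _ (Algebra.subset_adjoin (hrange ⟨r, rfl⟩)) _
  have := finite_adjoin_of_pow_mem_bot (Finset.forall_mem_union.mpr ⟨hX, hY⟩)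
  rw [Finset.coe_union] at this
  have hXcoe : (X : Set A) = insert 1 (range (a ∘ Fin.castLE hsn)) := by
    simp [X, Function.comp_def]
  calc p * (range fun e : Fin n → Fin p => ∏ r, a r ^ (e r : ℕ)).finrank K
      ≤ p * finrank K (Algebra.adjoin K ((X : Set A) ∪ Y)) := by
        rw [← Subalgebra.finrank_toSubmodule]
        exact Nat.mul_le_mul_left _ (Submodule.finrank_mono hspan)
    _ ≤ p ^ ((X : Set A).finrank K + Y.card) :=
        mul_finrank_adjoin_union_le (Finset.mem_insert_self _ _) hX hY
    _ ≤ p ^ ((insert 1 (range (a ∘ Fin.castLE hsn))).finrank K + (n - s)) := by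
        rw [hXcoe]
        exact Nat.pow_le_pow_right (NeZero.pos p)
          (Nat.add_le_add_left (Finset.card_image_le.trans (by simp)) _)

universe u v

theorem dim_an_subform_ge_of_pfister_general (p : ℕ) [Fact p.Prime] (F : Type u) [Field F] [CharP F p]
    (n : ℕ) (a : Fin n → F)
    (s : ℕ) (hsn : s ≤ n)
    (E : Type v) [Field E] [Algebra F E] (k : ℕ)
    (hk : p ^ n - defect p E
      (fun i : Fin n → Fin p => algebraMap F E (∏ r, a r ^ (i r : ℕ))) = p ^ k) :
    k + s + 1 - n ≤ s + 1 - defect p E (fun j : Fin (s + 1) => algebraMap F E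
      ((Fin.cons (1 : F) (fun i : Fin s => a (Fin.castLE hsn i)) : Fin (s + 1) → F) j)) := by
  have : CharP E p := charP_of_injective_algebraMap (algebraMap F E).injective p
  have hπ := defect_add_finrank_span p
    (fun i : Fin n → Fin p => algebraMap F E (∏ r, a r ^ (i r : ℕ)))
  have hσ := defect_add_finrank_span p (fun j : Fin (s + 1) => algebraMap F E
      ((Fin.cons (1 : F) (fun i : Fin s => a (Fin.castLE hsn i)) : Fin (s + 1) → F) j))
  have hbound := mul_finrank_span_prod_pow_le (K := pPow p E) hsn (algebraMap F E ∘ a)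
    fun r => Algebra.mem_bot.mpr ⟨⟨_, pow_mem_pPow p _⟩, rfl⟩
  rw [range_comp', Fin.range_cons, image_insert_eq, map_one, ← range_comp,
    Fintype.card_fin] at hσ
  rw [Fintype.card_fun, Fintype.card_fin, Fintype.card_fin] at hπ
  simp only [Function.comp_def] at hσ hbound
  simp only [← map_pow, ← map_prod] at hbound
  generalize Set.finrank (pPow p E) (range (_ : (Fin n → Fin p) → E)) = R at hπ hbound
  generalize Set.finrank (pPow p E) (insert (1 : E) _) = m at hσ hbound
  obtain rfl : R = p ^ k := by omega
  rw [← pow_succ', Nat.pow_le_pow_iff_right (Fact.out : p.Prime).one_lt] at hbound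
  omega

/-- If `σ = ⟨1,a₁,…,a_s⟩` is a minimal subform of the anisotropic quasi-Pfister form
`π = ⟪a₁,…,aₙ⟫` and `dim(π_E)_an = p^k`, then `dim(σ_E)_an ≥ k − n + s + 1`. -/
theorem dim_an_subform_ge_of_pfister (p : ℕ) [Fact p.Prime] (F : Type u) [Field F] [CharP F p]
    (n : ℕ) (a : Fin n → F) (ha0 : ∀ i, a i ≠ 0) (hindep : pIndep p a)
    (s : ℕ) (hs1 : 1 ≤ s) (hsn : s ≤ n)
    (E : Type v) [Field E] [Algebra F E] (k : ℕ)
    (hk : p ^ n - defect p E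
      (fun i : Fin n → Fin p => algebraMap F E (∏ r, a r ^ (i r : ℕ))) = p ^ k) :
    k + s + 1 - n ≤ s + 1 - defect p E (fun j : Fin (s + 1) => algebraMap F E
      ((Fin.cons (1 : F) (fun i : Fin s => a (Fin.castLE hsn i)) : Fin (s + 1) → F) j)) :=
  dim_an_subform_ge_of_pfister_general p F n a s hsn E k hk
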